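/- Let X be an infinite-dimensional complex Banach space and T a compact bounded linear operator on X whose spectrum is an infinite set. Then T cannot be written as the direct sum of a quasinilpotent operator and a Fredholm operator: there do not exist closed subspaces M and N of X with X = M ⊕ N (a topological direct sum), T(M) ⊆ M, T(N) ⊆ N, such that the restriction T|_M is quasinilpotent and the restriction T|_N is a Fredholm operator on N. -/

import Mathlib

/-!
A compact operator whose range has finite codimension lives on a finite-dimensional space:
adding a finite-dimensional complement of its range gives a compact surjection, and by the open
mapping theorem the image of a neighbourhood of zero under a surjection is again one, so the
target has a compact neighbourhood of zero. Hence in a decomposition `T = T|_M ⊕ T|_N` of a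
compact `T` with `T|_N` Fredholm, `N` is finite-dimensional, and
`σ(T) ⊆ σ(T|_M) ∪ σ(T|_N) = {0} ∪ σ(T|_N)` is finite.
-/

open Filter Topology Polynomial

variable {E : Type*} [NormedAddCommGroup E] [NormedSpace ℂ E]

/-- A (continuous linear) operator is Fredholm if its kernel is finite-dimensional and
its range has finite codimension. -/
def IsFredholm (T : E →L[ℂ] E) : Prop :=
  FiniteDimensional ℂ (LinearMap.ker (T : E →ₗ[ℂ] E)) ∧ FiniteDimensional ℂ (E ⧸ LinearMap.range (T : E →ₗ[ℂ] E))

/-- The Fredholm (essential) spectrum. -/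
def fredholmSpectrum (T : E →L[ℂ] E) : Set ℂ := {lam : ℂ | ¬ IsFredholm (T - lam • 1)}

/-- `T` is pseudo-B-Fredholm if `0` is not an accumulation point of its Fredholm spectrum. -/
def IsPseudoBFredholm (T : E →L[ℂ] E) : Prop :=
  ¬ AccPt (0 : ℂ) (Filter.principal (fredholmSpectrum T))

/-- A Riesz operator: `T - λ` is Fredholm for every `λ ≠ 0`. -/
def IsRiesz (T : E →L[ℂ] E) : Prop := ∀ lam : ℂ, lam ≠ 0 → IsFredholm (T - lam • 1)

lemma range_pow_invariant (T : E →L[ℂ] E) (n : ℕ) :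
    ∀ x ∈ LinearMap.range ((T ^ n : E →L[ℂ] E) : E →ₗ[ℂ] E), T x ∈ LinearMap.range ((T ^ n : E →L[ℂ] E) : E →ₗ[ℂ] E) := by
  rintro x ⟨y, rfl⟩
  refine ⟨T y, ?_⟩
  have h1 : (T ^ n) (T y) = (T ^ n * T) y := rfl
  have h2 : T ((T ^ n) y) = (T * T ^ n) y := rfl
  change (T ^ n) (T y) = T ((T ^ n) y)
  rw [h1, h2, ← pow_succ, ← pow_succ']

/-- Restriction of a continuous linear operator to an invariant submodule. -/
def restrictCLM (T : E →L[ℂ] E) (M : Submodule ℂ E) (h : ∀ x ∈ M, T x ∈ M) : M →L[ℂ] M where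
  toLinearMap := (T : E →ₗ[ℂ] E).restrict h
  cont := Continuous.subtype_mk (T.continuous.comp continuous_subtype_val) _

/-- `T` is B-Fredholm if for some `n` the range of `T ^ n` is closed and the operator induced
by `T` on it is Fredholm. -/
def IsBFredholm (T : E →L[ℂ] E) : Prop :=
  ∃ n : ℕ, IsClosed ((LinearMap.range ((T ^ n : E →L[ℂ] E) : E →ₗ[ℂ] E) : Submodule ℂ E) : Set E) ∧
    IsFredholm (restrictCLM T (LinearMap.range ((T ^ n : E →L[ℂ] E) : E →ₗ[ℂ] E)) (range_pow_invariant T n))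

/-- The essential ascent: the least `n` with `ker T ∩ range (T ^ n)` finite-dimensional. -/
noncomputable def essAscent (T : E →L[ℂ] E) : ℕ∞ :=
  ⨅ n ∈ {m : ℕ | FiniteDimensional ℂ ↥(LinearMap.ker (T : E →ₗ[ℂ] E) ⊓ LinearMap.range ((T ^ m : E →L[ℂ] E) : E →ₗ[ℂ] E))}, (n : ℕ∞)

/-- The essential descent: the least `n` with `range T + ker (T ^ n)` of finite codimension. -/
noncomputable def essDescent (T : E →L[ℂ] E) : ℕ∞ :=
  ⨅ n ∈ {m : ℕ | FiniteDimensional ℂ (E ⧸ (LinearMap.range (T : E →ₗ[ℂ] E) ⊔ LinearMap.ker ((T ^ m : E →L[ℂ] E) : E →ₗ[ℂ] E)))}, (n : ℕ∞)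

/-- `0` is a pole (or regular point) of order at most `m` of the resolvent of `Π(T)` in the
Calkin algebra: there is `S` with `TS - ST`, `STS - S` and `T^(m+1) S - T^m` all compact. -/
def DrazinAt (T : E →L[ℂ] E) (m : ℕ) : Prop :=
  ∃ S : E →L[ℂ] E, IsCompactOperator ⇑(T * S - S * T) ∧ IsCompactOperator ⇑(S * T * S - S) ∧
    IsCompactOperator ⇑(T ^ (m + 1) * S - T ^ m)

/-- `Π(T)` is Drazin invertible in the Calkin algebra. -/
def CalkinDrazin (T : E →L[ℂ] E) : Prop := ∃ m : ℕ, DrazinAt T m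

/-- A power compact operator. -/
def IsPowerCompact (K : E →L[ℂ] E) : Prop := ∃ m : ℕ, 1 ≤ m ∧ IsCompactOperator ⇑(K ^ m)

/-- An inessential operator: `1 - S * J` is Fredholm for every `S`. -/
def IsInessential (J : E →L[ℂ] E) : Prop := ∀ S : E →L[ℂ] E, IsFredholm (1 - S * J)

/-- The norm of `Π(A)` in the Calkin algebra: `inf {‖A + K‖ : K compact}`. -/
noncomputable def calkinNorm (A : E →L[ℂ] E) : ℝ :=
  sInf {r : ℝ | ∃ K : E →L[ℂ] E, IsCompactOperator ⇑K ∧ r = ‖A + K‖}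

/-- The ergodic means `M_n(T) = (1 + T + T² + ⋯ + Tⁿ)/n`. -/
noncomputable def meanOp (T : E →L[ℂ] E) (n : ℕ) : E →L[ℂ] E :=
  ((n : ℂ))⁻¹ • ∑ i ∈ Finset.range (n + 1), T ^ i

theorem Module.End.spectrum_subset_union_restrict {R V : Type*} [CommRing R] [AddCommGroup V]
    [Module R V] {f : Module.End R V} {M N : Submodule R V} (hMN : IsCompl M N)
    (hM : ∀ x ∈ M, f x ∈ M) (hN : ∀ x ∈ N, f x ∈ N) :
    spectrum R f ⊆ spectrum R (f.restrict hM) ∪ spectrum R (f.restrict hN) := by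
  let e := Submodule.prodEquivOfIsCompl M N hMN
  have hconj : e.symm.conjAlgEquiv R f =
      LinearMap.prodMapAlgHom R M N (f.restrict hM, f.restrict hN) := by
    refine LinearMap.ext fun p ↦ e.symm_apply_eq.mpr ?_
    simp [e]
  calc spectrum R f = spectrum R (e.symm.conjAlgEquiv R f) := (AlgEquiv.spectrum_eq _ _).symm
    _ ⊆ spectrum R (f.restrict hM, f.restrict hN) := hconj ▸ AlgHom.spectrum_apply_subset _ _
    _ = _ := Prod.spectrum_eq _ _

section CompactOperator

variable {𝕜 Y Z : Type*} [NontriviallyNormedField 𝕜] [CompleteSpace 𝕜]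
  [NormedAddCommGroup Y] [NormedSpace 𝕜 Y] [CompleteSpace Y]
  [NormedAddCommGroup Z] [NormedSpace 𝕜 Z] [CompleteSpace Z]

theorem FiniteDimensional.of_isCompactOperator_of_surjective {f : Y →L[𝕜] Z}
    (hf : IsCompactOperator f) (hsurj : Function.Surjective f) : FiniteDimensional 𝕜 Z := by
  obtain ⟨K, hK, hfK⟩ := hf
  have hK0 : K ∈ 𝓝 (0 : Z) := by
    have := (f.isOpenMap hsurj).image_mem_nhds hfK
    rw [map_zero] at this
    exact mem_of_superset this (Set.image_preimage_subset f K)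
  exact .of_isCompactOperator_id ⟨K, hK, hK0⟩

variable [LocallyCompactSpace 𝕜]

theorem FiniteDimensional.of_isCompactOperator_of_finiteDimensional_quotient_range
    {f : Y →L[𝕜] Z} (hf : IsCompactOperator f)
    [FiniteDimensional 𝕜 (Z ⧸ LinearMap.range (f : Y →ₗ[𝕜] Z))] : FiniteDimensional 𝕜 Z := by
  obtain ⟨F, hF⟩ := (LinearMap.range (f : Y →ₗ[𝕜] Z)).exists_isCompl
  have : FiniteDimensional 𝕜 F := (Submodule.quotientEquivOfIsCompl _ F hF).finiteDimensional
  have : ProperSpace F := FiniteDimensional.proper 𝕜 F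
  have hcompact : IsCompactOperator (f.coprod F.subtypeL) :=
    (hf.comp_clm (.fst 𝕜 Y F)).add
      ((isCompactOperator_of_locallyCompactSpace_rng F.subtypeL).comp_clm (.snd 𝕜 Y F))
  refine of_isCompactOperator_of_surjective hcompact fun z ↦ ?_
  obtain ⟨_, ⟨y, rfl⟩, w, hw, rfl⟩ :=
    Submodule.mem_sup.mp (hF.codisjoint.eq_top ▸ Submodule.mem_top : z ∈ _ ⊔ F)
  exact ⟨(y, ⟨w, hw⟩), rfl⟩

end CompactOperator

section Restriction

variable [CompleteSpace E]

theorem spectrum_subset_union_restrictCLM (T : E →L[ℂ] E) {M N : Submodule ℂ E}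
    (hMc : IsClosed (M : Set E)) (hNc : IsClosed (N : Set E)) (hMN : IsCompl M N)
    (hM : ∀ x ∈ M, T x ∈ M) (hN : ∀ x ∈ N, T x ∈ N) :
    spectrum ℂ T ⊆ spectrum ℂ (restrictCLM T M hM) ∪ spectrum ℂ (restrictCLM T N hN) := by
  have : CompleteSpace M := hMc.completeSpace_coe
  have : CompleteSpace N := hNc.completeSpace_coe
  simp only [ContinuousLinearMap.spectrum_eq]
  exact Module.End.spectrum_subset_union_restrict hMN hM hN

end Restriction

variable {X : Type*} [NormedAddCommGroup X] [NormedSpace ℂ X] [CompleteSpace X]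

theorem compact_infinite_spectrum_not_directSum_quasinilpotent_fredholm_general
    (T : X →L[ℂ] X)
    (hT : IsCompactOperator ⇑T) (hspec : (spectrum ℂ T).Infinite) :
    ¬ ∃ (M N : Submodule ℂ X) (_ : IsClosed (M : Set X)) (_ : IsClosed (N : Set X))
        (_ : IsCompl M N) (hM : ∀ x ∈ M, T x ∈ M) (hN : ∀ x ∈ N, T x ∈ N),
        spectrum ℂ (restrictCLM T M hM) = {0} ∧ IsFredholm (restrictCLM T N hN) := by
  rintro ⟨M, N, hMc, hNc, hMN, hM, hN, hquasi, -, hcodim⟩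
  have : CompleteSpace N := hNc.completeSpace_coe
  have hcompact : IsCompactOperator (restrictCLM T N hN) :=
    (hT : IsCompactOperator (T : X →ₗ[ℂ] X)).restrict hN hNc
  have : FiniteDimensional ℂ N :=
    .of_isCompactOperator_of_finiteDimensional_quotient_range hcompact
  have hfinite : (spectrum ℂ (restrictCLM T N hN)).Finite := by
    rw [ContinuousLinearMap.spectrum_eq]
    exact Module.End.finite_spectrum _
  refine hspec (((Set.finite_singleton 0).union hfinite).subset ?_)
  rw [← hquasi]
  exact spectrum_subset_union_restrictCLM T hMc hNc hMN hM hN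

/-- A compact operator with infinite spectrum is not a direct sum of a quasinilpotent
operator and a Fredholm operator. -/
theorem compact_infinite_spectrum_not_directSum_quasinilpotent_fredholm
    (hX : ¬ FiniteDimensional ℂ X) (T : X →L[ℂ] X)
    (hT : IsCompactOperator ⇑T) (hspec : (spectrum ℂ T).Infinite) :
    ¬ ∃ (M N : Submodule ℂ X) (_ : IsClosed (M : Set X)) (_ : IsClosed (N : Set X))
        (_ : IsCompl M N) (hM : ∀ x ∈ M, T x ∈ M) (hN : ∀ x ∈ N, T x ∈ N),
        spectrum ℂ (restrictCLM T M hM) = {0} ∧ IsFredholm (restrictCLM T N hN) :=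
  compact_infinite_spectrum_not_directSum_quasinilpotent_fredholm_general T hT hspec
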